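/- For every σ ≥ 1 there exists a constant C > 0 depending only on p and σ such that the following holds: for every σ-quasi-uniform partition of [a,b], every piecewise polynomial u^R = (P₀,…,P_N) of degree ≤ p with respect to it, every function u that is (p+1)-times continuously differentiable on [a,b], and every constant K ≥ 0, if ‖u − u^R‖_{L^∞(a,b)} ≤ K h^{p+1}, then for every 0 ≤ i ≤ N, every x_m ∈ [x_i, x_{i+1}], and every 0 ≤ k ≤ p, |P_i^{(k)}(x_m)| ≤ sup_{x ∈ [a,b]} |u^{(k)}(x)| + C (K + |u|_{W^{p+1}_∞}) h^{p+1−k}. (In particular, optimal-order L^∞ convergence forces all derivatives of u^R up to order p to remain bounded as h → 0.) -/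

import Mathlib

/-!
On an element `[xᵢ, xᵢ₊₁]`, let `T` be the Taylor polynomial of degree `p` of `u` at `xₘ`. Taylor's
theorem gives `|u - T| ≤ |u|_{W^{p+1}_∞} h^{p+1}` there, so `Pᵢ - T` is a polynomial of degree `≤ p`
bounded by `(K + |u|_{W^{p+1}_∞}) h^{p+1}` on the element. A Markov-type inverse inequality (all
norms on polynomials of degree `≤ p` are equivalent; here made explicit by Lagrange interpolation
on `[0, 1]` and an affine change of variables) bounds its `k`-th derivative by that quantity
divided by `(xᵢ₊₁ - xᵢ)ᵏ ≥ (h / σ)ᵏ`, and `(Pᵢ - T)⁽ᵏ⁾(xₘ) = Pᵢ⁽ᵏ⁾(xₘ) - u⁽ᵏ⁾(xₘ)`.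
-/

open MeasureTheory

noncomputable section

/-- Maximal mesh size `h` of the partition `x 0 < x 1 < ... < x (N+1)`. -/
def meshH (N : ℕ) (x : ℕ → ℝ) : ℝ :=
  (Finset.range (N + 1)).sup' (Finset.nonempty_range_iff.mpr (Nat.succ_ne_zero N))
    (fun i => x (i + 1) - x i)

/-- Minimal mesh size `h_min`. -/
def meshHmin (N : ℕ) (x : ℕ → ℝ) : ℝ :=
  (Finset.range (N + 1)).inf' (Finset.nonempty_range_iff.mpr (Nat.succ_ne_zero N))
    (fun i => x (i + 1) - x i)

/-- Jump of the `k`-th derivative of the piecewise polynomial `P` at the node `x i`. -/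
def jumpD (P : ℕ → Polynomial ℝ) (x : ℕ → ℝ) (i k : ℕ) : ℝ :=
  (Polynomial.derivative^[k] (P i)).eval (x i)
    - (Polynomial.derivative^[k] (P (i - 1))).eval (x i)

/-- `L^∞` distance between `u` and the piecewise polynomial `u^R` defined by `P`. -/
def distLinf (N : ℕ) (x : ℕ → ℝ) (P : ℕ → Polynomial ℝ) (u : ℝ → ℝ) : ℝ :=
  (Finset.range (N + 1)).sup' (Finset.nonempty_range_iff.mpr (Nat.succ_ne_zero N))
    (fun i => sSup ((fun t => |u t - (P i).eval t|) '' Set.Icc (x i) (x (i + 1))))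

/-- Sobolev seminorm `|u|_{W^{p+1}_∞}` on `[a,b]`. -/
def semiWinf (p : ℕ) (a b : ℝ) (u : ℝ → ℝ) : ℝ :=
  sSup ((fun t => |iteratedDerivWithin (p + 1) u (Set.Icc a b) t|) '' Set.Icc a b)

open Polynomial Set
open scoped Nat

namespace Polynomial

theorem iterate_derivative_comp_C_mul_X_add_C {R : Type*} [CommRing R] (Q : R[X]) (d c : R)
    (k : ℕ) :
    derivative^[k] (Q.comp (C d * X + C c)) =
      C (d ^ k) * (derivative^[k] Q).comp (C d * X + C c) := by
  induction k with
  | zero => simp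
  | succ k ih =>
    rw [Function.iterate_succ_apply', ih, derivative_C_mul, derivative_comp,
      Function.iterate_succ_apply', pow_succ, C_mul]
    simp only [derivative_add, derivative_C_mul_X, derivative_C, add_zero]
    ring

theorem exists_markov_bound_unitInterval (p : ℕ) :
    ∃ M : ℝ, 0 < M ∧ ∀ Q : ℝ[X], Q.natDegree ≤ p → ∀ k ≤ p, ∀ B : ℝ,
      (∀ t ∈ Icc (0 : ℝ) 1, |Q.eval t| ≤ B) →
      ∀ t ∈ Icc (0 : ℝ) 1, |(derivative^[k] Q).eval t| ≤ M * B := by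
  set s := Finset.range (p + 1)
  set v : ℕ → ℝ := fun j => j / (p + 1)
  have hv : InjOn v s := fun i _ j _ hij => by
    simp only [v] at hij
    field_simp at hij
    exact_mod_cast hij
  have hv01 : ∀ j ∈ s, v j ∈ Icc (0 : ℝ) 1 := fun j hj => by
    have : (j : ℝ) ≤ p := by exact_mod_cast Finset.mem_range_succ_iff.mp hj
    exact ⟨by positivity, (div_le_one (by positivity)).2 (by linarith)⟩
  set L := Lagrange.basis s v
  obtain ⟨M₀, hM₀⟩ := (isCompact_Icc (a := (0 : ℝ)) (b := 1)).exists_bound_of_continuousOn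
    (f := fun t => ∑ j ∈ s, ∑ k ∈ s, |(derivative^[k] (L j)).eval t|) (by fun_prop)
  refine ⟨max M₀ 1, by positivity, fun Q hQ k hk B hQB t ht => ?_⟩
  have hB : 0 ≤ B := (abs_nonneg _).trans (hQB 0 (left_mem_Icc.2 zero_le_one))
  have hQ : Q = ∑ j ∈ s, C (Q.eval (v j)) * L j := by
    have hdeg : Q.degree < s.card := by
      rw [Finset.card_range]
      exact degree_le_natDegree.trans_lt (by exact_mod_cast Nat.lt_succ_of_le hQ)
    conv_lhs => rw [Lagrange.eq_interpolate hv hdeg, Lagrange.interpolate_apply]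
  calc |(derivative^[k] Q).eval t|
      = |∑ j ∈ s, Q.eval (v j) * (derivative^[k] (L j)).eval t| := by
        conv_lhs => rw [hQ]
        rw [iterate_derivative_sum, eval_finsetSum]
        simp only [iterate_derivative_C_mul, eval_mul, eval_C]
    _ ≤ ∑ j ∈ s, B * |(derivative^[k] (L j)).eval t| := by
        refine (Finset.abs_sum_le_sum_abs _ _).trans (Finset.sum_le_sum fun j hj => ?_)
        rw [abs_mul]
        exact mul_le_mul_of_nonneg_right (hQB (v j) (hv01 j hj)) (abs_nonneg _)
    _ ≤ B * ∑ j ∈ s, ∑ k ∈ s, |(derivative^[k] (L j)).eval t| := by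
        rw [← Finset.mul_sum]
        refine mul_le_mul_of_nonneg_left (Finset.sum_le_sum fun j _ => ?_) hB
        exact Finset.single_le_sum (f := fun k => |(derivative^[k] (L j)).eval t|)
          (fun _ _ => abs_nonneg _) (Finset.mem_range_succ_iff.mpr hk)
    _ ≤ max M₀ 1 * B := by
        rw [mul_comm]
        refine mul_le_mul_of_nonneg_right ?_ hB
        exact (le_abs_self _).trans ((hM₀ t ht).trans (le_max_left _ _))

theorem exists_markov_bound_Icc (p : ℕ) :
    ∃ M : ℝ, 0 < M ∧ ∀ Q : ℝ[X], Q.natDegree ≤ p → ∀ k ≤ p, ∀ c d : ℝ, c < d → ∀ B : ℝ,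
      (∀ y ∈ Icc c d, |Q.eval y| ≤ B) →
      ∀ t ∈ Icc c d, |(derivative^[k] Q).eval t| ≤ M * B / (d - c) ^ k := by
  obtain ⟨M, hM, hunit⟩ := exists_markov_bound_unitInterval p
  refine ⟨M, hM, fun Q hQ k hk c d hcd B hQB t ht => ?_⟩
  have hdc : 0 < d - c := sub_pos.2 hcd
  set A : ℝ[X] := C (d - c) * X + C c
  have hA : ∀ s, A.eval s = (d - c) * s + c := fun s => by simp [A]
  have hQA : (Q.comp A).natDegree ≤ p :=
    natDegree_comp_le.trans <|
      (Nat.mul_le_mul_left _ natDegree_linear_le).trans (by simpa using hQ)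
  have hQAB : ∀ s ∈ Icc (0 : ℝ) 1, |(Q.comp A).eval s| ≤ B := fun s hs => by
    rw [eval_comp, hA]
    exact hQB _ ⟨by nlinarith [hs.1], by nlinarith [hs.2]⟩
  have hs : (t - c) / (d - c) ∈ Icc (0 : ℝ) 1 :=
    ⟨div_nonneg (by linarith [ht.1]) hdc.le, (div_le_one hdc).2 (by linarith [ht.2])⟩
  have key := hunit _ hQA k hk B hQAB _ hs
  rw [iterate_derivative_comp_C_mul_X_add_C, eval_mul, eval_C, eval_comp, hA,
    mul_div_cancel₀ _ hdc.ne', sub_add_cancel, abs_mul, abs_of_pos (pow_pos hdc k)] at key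
  rw [le_div_iff₀ (pow_pos hdc k), mul_comm]
  exact key

end Polynomial

/-- `taylorWithin f n s x₀` as an element of `ℝ[X]` rather than of `PolynomialModule ℝ ℝ`. -/
def taylorWithinPolynomial (f : ℝ → ℝ) (n : ℕ) (s : Set ℝ) (x₀ : ℝ) : ℝ[X] :=
  ∑ j ∈ Finset.range (n + 1), C (iteratedDerivWithin j f s x₀ / j !) * (X - C x₀) ^ j

section TaylorPolynomial

variable (f : ℝ → ℝ) (n : ℕ) (s : Set ℝ) (x₀ : ℝ)

theorem natDegree_taylorWithinPolynomial_le :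
    (taylorWithinPolynomial f n s x₀).natDegree ≤ n := by
  refine natDegree_sum_le_of_forall_le _ _ fun j hj => ?_
  refine (natDegree_C_mul_le _ _).trans <| natDegree_pow_le.trans ?_
  rw [natDegree_X_sub_C, mul_one]
  exact Finset.mem_range_succ_iff.mp hj

theorem eval_taylorWithinPolynomial (x : ℝ) :
    (taylorWithinPolynomial f n s x₀).eval x = taylorWithinEval f n s x₀ x := by
  rw [taylor_within_apply, taylorWithinPolynomial, eval_finsetSum]
  refine Finset.sum_congr rfl fun j _ => ?_
  simp only [eval_mul, eval_C, eval_pow, eval_sub, eval_X, smul_eq_mul]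
  ring

theorem eval_iterate_derivative_taylorWithinPolynomial_self {k : ℕ} (hk : k ≤ n) :
    (derivative^[k] (taylorWithinPolynomial f n s x₀)).eval x₀ =
      iteratedDerivWithin k f s x₀ := by
  rw [taylorWithinPolynomial, iterate_derivative_sum, eval_finsetSum,
    Finset.sum_eq_single_of_mem k (Finset.mem_range_succ_iff.mpr hk)]
  · simp only [iterate_derivative_C_mul, iterate_derivative_X_sub_pow, Nat.sub_self, pow_zero,
      Nat.descFactorial_self, eval_mul, eval_C, eval_natCast, nsmul_eq_mul, mul_one]
    field_simp
  · intro j _ hjk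
    simp only [iterate_derivative_C_mul, iterate_derivative_X_sub_pow, eval_mul, eval_C,
      eval_smul, eval_pow, eval_sub, eval_X, sub_self]
    rcases hjk.lt_or_gt with hlt | hgt
    · simp [Nat.descFactorial_eq_zero_iff_lt.mpr hlt]
    · simp [zero_pow (Nat.sub_ne_zero_of_lt hgt)]

end TaylorPolynomial

theorem abs_sub_taylorWithinEval_le {f : ℝ → ℝ} {a b D x₀ x : ℝ} {n : ℕ} (hab : a < b)
    (hf : ContDiffOn ℝ (n + 1 : ℕ) f (Icc a b)) (hx₀ : x₀ ∈ Icc a b) (hx : x ∈ Icc a b)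
    (hD : ∀ y ∈ Icc a b, |iteratedDerivWithin (n + 1) f (Icc a b) y| ≤ D) :
    |f x - taylorWithinEval f n (Icc a b) x₀ x| ≤ D * |x - x₀| ^ (n + 1) / n ! := by
  have hsub : uIcc x₀ x ⊆ Icc a b := uIcc_subset_Icc hx₀ hx
  have hf' : DifferentiableOn ℝ (iteratedDerivWithin n f (Icc a b)) (Icc a b) :=
    hf.differentiableOn_iteratedDerivWithin (by exact_mod_cast n.lt_succ_self)
      (uniqueDiffOn_Icc hab)
  have hderiv : ∀ t ∈ uIcc x₀ x,
      HasDerivWithinAt (fun y => taylorWithinEval f n (Icc a b) y x)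
        (((n ! : ℝ)⁻¹ * (x - t) ^ n) • iteratedDerivWithin (n + 1) f (Icc a b) t) (uIcc x₀ x) t :=
    fun t ht =>
      (hasDerivWithinAt_taylorWithinEval_at_Icc x hab (hsub ht) hf.of_succ hf').mono hsub
  have hbound : ∀ t ∈ uIcc x₀ x,
      ‖((n ! : ℝ)⁻¹ * (x - t) ^ n) • iteratedDerivWithin (n + 1) f (Icc a b) t‖
        ≤ (n ! : ℝ)⁻¹ * |x - x₀| ^ n * D := fun t ht => by
    rw [norm_smul, Real.norm_eq_abs, Real.norm_eq_abs, abs_mul, abs_pow, abs_inv, Nat.abs_cast]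
    have hxt : |x - t| ^ n ≤ |x - x₀| ^ n :=
      pow_le_pow_left₀ (abs_nonneg _) (abs_sub_right_of_mem_uIcc ht) n
    exact mul_le_mul (by gcongr) (hD t (hsub ht)) (abs_nonneg _) (by positivity)
  have hmvt := Convex.norm_image_sub_le_of_norm_hasDerivWithin_le hderiv hbound
    (convex_uIcc x₀ x) left_mem_uIcc right_mem_uIcc
  simp only [taylorWithinEval_self, Real.norm_eq_abs] at hmvt
  calc |f x - taylorWithinEval f n (Icc a b) x₀ x|
      ≤ (n ! : ℝ)⁻¹ * |x - x₀| ^ n * D * |x - x₀| := hmvt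
    _ = D * |x - x₀| ^ (n + 1) / n ! := by ring

theorem abs_le_sSup_image_abs {α : Type*} [TopologicalSpace α] {f : α → ℝ} {s : Set α} {y : α}
    (hs : IsCompact s) (hf : ContinuousOn f s) (hy : y ∈ s) :
    |f y| ≤ sSup ((fun t => |f t|) '' s) :=
  le_csSup (hs.bddAbove_image hf.abs) (mem_image_of_mem _ hy)

theorem exists_abs_eval_iterate_derivative_le_of_abs_sub_le (p : ℕ) : ∃ M : ℝ, 0 < M ∧
    ∀ {u : ℝ → ℝ} {a b D : ℝ}, a < b → ContDiffOn ℝ (p + 1 : ℕ) u (Icc a b) →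
    (∀ y ∈ Icc a b, |iteratedDerivWithin (p + 1) u (Icc a b) y| ≤ D) →
    ∀ {c d : ℝ}, c < d → Icc c d ⊆ Icc a b → ∀ {P : ℝ[X]}, P.natDegree ≤ p → ∀ {E : ℝ},
    (∀ y ∈ Icc c d, |u y - P.eval y| ≤ E) → ∀ xm ∈ Icc c d, ∀ k ≤ p,
    |(derivative^[k] P).eval xm| ≤ |iteratedDerivWithin k u (Icc a b) xm| +
      M * (E + D * (d - c) ^ (p + 1)) / (d - c) ^ k := by
  obtain ⟨M, hM, hmarkov⟩ := exists_markov_bound_Icc p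
  refine ⟨M, hM, fun {u a b D} hab hu hD {c d} hcd hsub {P} hP {E} hE xm hxm k hk => ?_⟩
  have hD0 : 0 ≤ D := (abs_nonneg _).trans (hD a (left_mem_Icc.2 hab.le))
  set T := taylorWithinPolynomial u p (Icc a b) xm
  have hT : ∀ y ∈ Icc c d, |u y - T.eval y| ≤ D * (d - c) ^ (p + 1) := fun y hy => by
    rw [eval_taylorWithinPolynomial]
    refine (abs_sub_taylorWithinEval_le hab hu (hsub hxm) (hsub hy) hD).trans ?_
    have hyxm : |y - xm| ≤ d - c :=
      abs_sub_le_iff.2 ⟨by linarith [hy.2, hxm.1], by linarith [hy.1, hxm.2]⟩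
    calc D * |y - xm| ^ (p + 1) / p ! ≤ D * |y - xm| ^ (p + 1) :=
          div_le_self (by positivity) (by exact_mod_cast p.factorial_pos)
      _ ≤ D * (d - c) ^ (p + 1) := by gcongr
  have hPT : ∀ y ∈ Icc c d, |(P - T).eval y| ≤ E + D * (d - c) ^ (p + 1) := fun y hy => by
    rw [eval_sub]
    calc |P.eval y - T.eval y| ≤ |P.eval y - u y| + |u y - T.eval y| := abs_sub_le _ _ _
      _ ≤ E + D * (d - c) ^ (p + 1) := by
        rw [abs_sub_comm]
        exact add_le_add (hE y hy) (hT y hy)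
  have hdeg : (P - T).natDegree ≤ p :=
    (natDegree_sub_le _ _).trans (max_le hP (natDegree_taylorWithinPolynomial_le _ _ _ _))
  have hsplit : (derivative^[k] P).eval xm =
      iteratedDerivWithin k u (Icc a b) xm + (derivative^[k] (P - T)).eval xm := by
    rw [iterate_derivative_sub, eval_sub,
      eval_iterate_derivative_taylorWithinPolynomial_self _ _ _ _ hk]
    ring
  rw [hsplit]
  exact (abs_add_le _ _).trans (add_le_add_right (hmarkov _ hdeg k hk c d hcd _ hPT xm hxm) _)

theorem pow_succ_div_pow_le {h ℓ σ : ℝ} {p k : ℕ} (hh : 0 ≤ h) (hℓ : 0 < ℓ) (hσ : 1 ≤ σ)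
    (hhℓ : h ≤ σ * ℓ) (hk : k ≤ p) : h ^ (p + 1) / ℓ ^ k ≤ σ ^ p * h ^ (p + 1 - k) := by
  have hratio : h / ℓ ≤ σ := (div_le_iff₀ hℓ).2 hhℓ
  calc h ^ (p + 1) / ℓ ^ k = (h / ℓ) ^ k * h ^ (p + 1 - k) := by
        rw [div_pow, div_mul_eq_mul_div, ← pow_add, Nat.add_sub_cancel' (by omega)]
    _ ≤ σ ^ k * h ^ (p + 1 - k) := by gcongr
    _ ≤ σ ^ p * h ^ (p + 1 - k) := by gcongr

section Partition

variable {N : ℕ} {x : ℕ → ℝ} {i : ℕ}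

theorem Icc_subset_Icc_of_forall_lt_succ (hx : ∀ i ≤ N, x i < x (i + 1)) (hi : i ≤ N) :
    Icc (x i) (x (i + 1)) ⊆ Icc (x 0) (x (N + 1)) := by
  have hmono : MonotoneOn x (Iic (N + 1)) :=
    (strictMonoOn_Iic_of_lt_succ fun m hm => by
      simpa [Order.succ_eq_add_one] using hx m (by omega)).monotoneOn
  exact Icc_subset_Icc (hmono (by simp) (by simp; omega) (Nat.zero_le i))
    (hmono (by simp; omega) (by simp) (by omega))

theorem sub_le_meshH (hi : i ≤ N) : x (i + 1) - x i ≤ meshH N x :=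
  Finset.le_sup' (fun j => x (j + 1) - x j) (Finset.mem_range_succ_iff.2 hi)

theorem meshHmin_le_sub (hi : i ≤ N) : meshHmin N x ≤ x (i + 1) - x i :=
  Finset.inf'_le (fun j => x (j + 1) - x j) (Finset.mem_range_succ_iff.2 hi)

theorem abs_sub_eval_le_distLinf {P : ℕ → ℝ[X]} {u : ℝ → ℝ} (hi : i ≤ N)
    (hu : ContinuousOn u (Icc (x i) (x (i + 1)))) {y : ℝ} (hy : y ∈ Icc (x i) (x (i + 1))) :
    |u y - (P i).eval y| ≤ distLinf N x P u :=
  (abs_le_sSup_image_abs isCompact_Icc (hu.sub (P i).continuousOn) hy).trans <|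
    Finset.le_sup' (fun j => sSup ((fun t => |u t - (P j).eval t|) '' Icc (x j) (x (j + 1))))
      (Finset.mem_range_succ_iff.2 hi)

end Partition

/-- Optimal-order `L^∞` convergence forces all derivatives of `u^R` up to order `p`
to remain bounded (Type I `W^{p+1}_∞` numerical smoothness is necessary). -/
theorem optimal_linf_convergence_implies_derivative_bound (p : ℕ) (σ : ℝ) (hσ : 1 ≤ σ) :
    ∃ C : ℝ, 0 < C ∧
      ∀ (N : ℕ), 1 ≤ N → ∀ (a b : ℝ), a < b →
      ∀ (x : ℕ → ℝ), x 0 = a → x (N + 1) = b → (∀ i ≤ N, x i < x (i + 1)) →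
      meshH N x ≤ σ * meshHmin N x →
      ∀ (P : ℕ → Polynomial ℝ), (∀ i ≤ N, (P i).natDegree ≤ p) →
      ∀ (u : ℝ → ℝ), ContDiffOn ℝ (p + 1 : ℕ) u (Set.Icc a b) →
      ∀ (K : ℝ), 0 ≤ K →
      distLinf N x P u ≤ K * meshH N x ^ (p + 1) →
      ∀ i ≤ N, ∀ xm ∈ Set.Icc (x i) (x (i + 1)), ∀ k ≤ p,
      |(Polynomial.derivative^[k] (P i)).eval xm| ≤
        sSup ((fun t => |iteratedDerivWithin k u (Set.Icc a b) t|) '' Set.Icc a b)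
          + C * (K + semiWinf p a b u) * meshH N x ^ (p + 1 - k) := by
  obtain ⟨M, hM, hlocal⟩ := exists_abs_eval_iterate_derivative_le_of_abs_sub_le p
  refine ⟨M * σ ^ p, by positivity, ?_⟩
  rintro N - a b hab x rfl rfl hx hqu P hP u hu K hK hdist i hi xm hxm k hk
  set h := meshH N x
  set D := semiWinf p (x 0) (x (N + 1)) u
  set ℓ := x (i + 1) - x i
  have hℓ : 0 < ℓ := sub_pos.2 (hx i hi)
  have hℓh : ℓ ≤ h := sub_le_meshH hi
  have hsub := Icc_subset_Icc_of_forall_lt_succ hx hi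
  have hD : ∀ y ∈ Icc (x 0) (x (N + 1)),
      |iteratedDerivWithin (p + 1) u (Icc (x 0) (x (N + 1))) y| ≤ D := fun y hy =>
    abs_le_sSup_image_abs isCompact_Icc
      (hu.continuousOn_iteratedDerivWithin le_rfl (uniqueDiffOn_Icc hab)) hy
  have hD0 : 0 ≤ D := (abs_nonneg _).trans (hD _ (left_mem_Icc.2 hab.le))
  have hE : ∀ y ∈ Icc (x i) (x (i + 1)), |u y - (P i).eval y| ≤ K * h ^ (p + 1) := fun y hy =>
    (abs_sub_eval_le_distLinf hi (hu.continuousOn.mono hsub) hy).trans hdist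
  have hderiv := abs_le_sSup_image_abs isCompact_Icc (hu.continuousOn_iteratedDerivWithin
    (by exact_mod_cast hk.trans p.le_succ) (uniqueDiffOn_Icc hab)) (hsub hxm)
  have hscale : M * (K * h ^ (p + 1) + D * ℓ ^ (p + 1)) / ℓ ^ k ≤
      M * σ ^ p * (K + D) * h ^ (p + 1 - k) := by
    have hhℓ : h ≤ σ * ℓ := hqu.trans (by gcongr; exact meshHmin_le_sub hi)
    calc M * (K * h ^ (p + 1) + D * ℓ ^ (p + 1)) / ℓ ^ k
        ≤ M * (K + D) * (h ^ (p + 1) / ℓ ^ k) := by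
          rw [mul_div_assoc', mul_assoc, add_mul]; gcongr
      _ ≤ M * (K + D) * (σ ^ p * h ^ (p + 1 - k)) := by
          gcongr; exact pow_succ_div_pow_le (hℓ.le.trans hℓh) hℓ hσ hhℓ hk
      _ = M * σ ^ p * (K + D) * h ^ (p + 1 - k) := by ring
  linarith [hlocal hab hu hD (hx i hi) hsub (hP i hi) hE xm hxm k hk]

end
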